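/- Let H1 and H2 be complex Hilbert spaces and let S and T be densely defined closed linear operators from H1 to H2 with equal domains D(S) = D(T). If the operator T − S (defined on D(T)) is bounded, i.e. there is a constant C ≥ 0 with ‖Tx − Sx‖ ≤ C‖x‖ for all x ∈ D(T), then the gap satisfies θ(S,T) ≤ C; in particular θ(S,T) ≤ ‖T − S‖, the operator norm of the bounded operator T − S on D(T). -/

import Mathlib

open scoped InnerProductSpace

/-- Orthogonal projection (as an operator on `E`) onto the closure of a submodule. -/
noncomputable def projCL {E : Type*} [NormedAddCommGroup E] [InnerProductSpace ℂ E]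
    [CompleteSpace E] (M : Submodule ℂ E) : E →L[ℂ] E :=
  haveI : CompleteSpace M.topologicalClosure :=
    M.isClosed_topologicalClosure.completeSpace_coe
  M.topologicalClosure.subtypeL.comp (Submodule.orthogonalProjectionOnto M.topologicalClosure)

/-- The graph of a partially defined operator, viewed inside the Hilbert space `E ×₂ F`. -/
noncomputable def graphL2 {E F : Type*} [NormedAddCommGroup E] [InnerProductSpace ℂ E]
    [NormedAddCommGroup F] [InnerProductSpace ℂ F] (T : E →ₗ.[ℂ] F) :
    Submodule ℂ (WithLp 2 (E × F)) :=
  T.graph.map ((WithLp.linearEquiv 2 ℂ (E × F)).symm : (E × F) →ₗ[ℂ] WithLp 2 (E × F))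

/-- The gap `θ(S,T) = ‖P_{G(S)} - P_{G(T)}‖` between two (partially defined) operators. -/
noncomputable def gap {E F : Type*} [NormedAddCommGroup E] [InnerProductSpace ℂ E]
    [NormedAddCommGroup F] [InnerProductSpace ℂ F] [CompleteSpace E] [CompleteSpace F]
    (S T : E →ₗ.[ℂ] F) : ℝ :=
  ‖projCL (graphL2 S) - projCL (graphL2 T)‖

/-- The minimum modulus `m(T) = inf {‖Tx‖ : x ∈ D(T), ‖x‖ = 1}` of a partially
defined operator. -/
noncomputable def minModulus {E F : Type*} [NormedAddCommGroup E] [InnerProductSpace ℂ E]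
    [NormedAddCommGroup F] [InnerProductSpace ℂ F] (T : E →ₗ.[ℂ] F) : ℝ :=
  sInf ((fun x : T.domain => ‖T x‖) '' {x : T.domain | ‖(x : E)‖ = 1})

/-- A partially defined operator is minimum attaining if its minimum modulus is attained
at a unit vector of its domain. -/
def MinAttaining {E F : Type*} [NormedAddCommGroup E] [InnerProductSpace ℂ E]
    [NormedAddCommGroup F] [InnerProductSpace ℂ F] (T : E →ₗ.[ℂ] F) : Prop :=
  ∃ x₀ : T.domain, ‖(x₀ : E)‖ = 1 ∧ ‖T x₀‖ = minModulus T

/-- The sum `T + S` of a partially defined operator `T` and a bounded operator `S`,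
with domain `D(T)`. -/
def addBdd {E F : Type*} [NormedAddCommGroup E] [InnerProductSpace ℂ E]
    [NormedAddCommGroup F] [InnerProductSpace ℂ F] (T : E →ₗ.[ℂ] F) (S : E →L[ℂ] F) :
    E →ₗ.[ℂ] F :=
  ⟨T.domain, T.toFun + (S : E →ₗ[ℂ] F).comp T.domain.subtype⟩

/-- The minimum modulus `m(T) = inf {‖Tx‖ : ‖x‖ = 1}` of a bounded operator. -/
noncomputable def minModulusB {E F : Type*} [NormedAddCommGroup E] [InnerProductSpace ℂ E]
    [NormedAddCommGroup F] [InnerProductSpace ℂ F] (T : E →L[ℂ] F) : ℝ :=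
  sInf ((fun x : E => ‖T x‖) '' {x : E | ‖x‖ = 1})

/-- A bounded operator is minimum attaining if its minimum modulus is attained at a
unit vector. -/
def MinAttainingB {E F : Type*} [NormedAddCommGroup E] [InnerProductSpace ℂ E]
    [NormedAddCommGroup F] [InnerProductSpace ℂ F] (T : E →L[ℂ] F) : Prop :=
  ∃ x₀ : E, ‖x₀‖ = 1 ∧ ‖T x₀‖ = minModulusB T


/-! Write `P`, `Q` for the orthogonal projections onto the closures of the graphs of `S` and `T`.
For `u = (x, Sx)` in the graph of `S`, the point `(x, Tx)` of the graph of `T` lies within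
`‖Tx - Sx‖ ≤ C‖x‖ ≤ C‖u‖` of `u`, so `‖(1 - Q)u‖ ≤ C‖u‖` on the graph of `S` and, symmetrically,
`‖(1 - P)v‖ ≤ C‖v‖` on the graph of `T`; by continuity both persist on the closures.
Now `(P - Q)z = (1 - Q)Pz - Q(1 - P)z` is an orthogonal sum. Its first term is at most `C‖Pz‖`,
and its second at most `C‖(1 - P)z‖`, because for `b ⊥ ran P` and `w = Qb` one has
`‖w‖² = ⟪w, b⟫ = ⟪(1 - P)w, b⟫ ≤ C‖w‖‖b‖`. Pythagoras on both sides gives `‖(P - Q)z‖ ≤ C‖z‖`. -/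

namespace Submodule

variable {𝕜 E : Type*} [RCLike 𝕜] [NormedAddCommGroup E] [InnerProductSpace 𝕜 E]

theorem norm_sub_starProjection_le_of_mem (K : Submodule 𝕜 E) [K.HasOrthogonalProjection]
    (u : E) {v : E} (hv : v ∈ K) : ‖u - K.starProjection u‖ ≤ ‖u - v‖ := by
  rw [starProjection_minimal]
  exact ciInf_le ⟨0, Set.forall_mem_range.mpr fun _ => norm_nonneg _⟩ (⟨v, hv⟩ : K)

variable {K L : Submodule 𝕜 E} [K.HasOrthogonalProjection] [L.HasOrthogonalProjection]
  {C : ℝ}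

theorem norm_starProjection_le_of_mem_orthogonal (hC : 0 ≤ C)
    (hLK : ∀ v ∈ L, ‖v - K.starProjection v‖ ≤ C * ‖v‖) {b : E} (hb : b ∈ Kᗮ) :
    ‖L.starProjection b‖ ≤ C * ‖b‖ := by
  set w := L.starProjection b
  have hwb : ⟪w, b⟫_𝕜 = ⟪w - K.starProjection w, b⟫_𝕜 := by
    rw [inner_sub_left, inner_right_of_mem_orthogonal (K.starProjection_apply_mem w) hb, sub_zero]
  have key : ‖w‖ * ‖w‖ ≤ C * ‖b‖ * ‖w‖ :=
    calc ‖w‖ * ‖w‖ = RCLike.re ⟪w, b⟫_𝕜 := by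
          rw [re_inner_starProjection_eq_normSq, sq]; rfl
      _ ≤ ‖⟪w - K.starProjection w, b⟫_𝕜‖ := hwb ▸ RCLike.re_le_norm _
      _ ≤ ‖w - K.starProjection w‖ * ‖b‖ := norm_inner_le_norm _ _
      _ ≤ C * ‖w‖ * ‖b‖ := by gcongr; exact hLK w (L.starProjection_apply_mem b)
      _ = C * ‖b‖ * ‖w‖ := by ring
  rcases (norm_nonneg w).eq_or_lt with hw | hw
  · rw [← hw]; positivity
  · exact le_of_mul_le_mul_right key hw

theorem norm_starProjection_sub_starProjection_le (hC : 0 ≤ C)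
    (hKL : ∀ u ∈ K, ‖u - L.starProjection u‖ ≤ C * ‖u‖)
    (hLK : ∀ v ∈ L, ‖v - K.starProjection v‖ ≤ C * ‖v‖) :
    ‖K.starProjection - L.starProjection‖ ≤ C := by
  refine ContinuousLinearMap.opNorm_le_bound _ hC fun z => ?_
  set d := (K.starProjection - L.starProjection) z
  have hLL : L.starProjection (L.starProjection z) = L.starProjection z :=
    starProjection_eq_self_iff.mpr (L.starProjection_apply_mem z)
  have hLd : L.starProjection d = -L.starProjection (Kᗮ.starProjection z) := by
    simp only [starProjection_orthogonal', sub_apply, one_apply_eq_self, map_sub, hLL, neg_sub, d]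
  have hLd' : Lᗮ.starProjection d = K.starProjection z - L.starProjection (K.starProjection z) := by
    simp only [starProjection_orthogonal', sub_apply, one_apply_eq_self, map_sub, hLL,
      sub_self, sub_zero, d]
  have h1 : ‖L.starProjection d‖ ≤ C * ‖Kᗮ.starProjection z‖ := by
    rw [hLd, norm_neg]
    exact norm_starProjection_le_of_mem_orthogonal hC hLK (starProjection_apply_mem _ _)
  have h2 : ‖Lᗮ.starProjection d‖ ≤ C * ‖K.starProjection z‖ := by
    rw [hLd']; exact hKL _ (starProjection_apply_mem _ _)
  have : ‖d‖ ^ 2 ≤ (C * ‖z‖) ^ 2 :=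
    calc ‖d‖ ^ 2 = ‖L.starProjection d‖ ^ 2 + ‖Lᗮ.starProjection d‖ ^ 2 :=
          L.norm_sq_eq_add_norm_sq_starProjection d
      _ ≤ (C * ‖Kᗮ.starProjection z‖) ^ 2 + (C * ‖K.starProjection z‖) ^ 2 := by gcongr
      _ = (C * ‖z‖) ^ 2 := by
          rw [mul_pow, mul_pow, mul_pow, K.norm_sq_eq_add_norm_sq_starProjection z]; ring
  exact (pow_le_pow_iff_left₀ (norm_nonneg _) (by positivity) two_ne_zero).1 this

end Submodule

section Gap

variable {E : Type*} [NormedAddCommGroup E] [InnerProductSpace ℂ E] [CompleteSpace E]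

theorem projCL_eq_starProjection (M : Submodule ℂ E) :
    projCL M = M.topologicalClosure.starProjection :=
  rfl

theorem norm_projCL_sub_projCL_le {M N : Submodule ℂ E} {C : ℝ} (hC : 0 ≤ C)
    (hMN : ∀ u ∈ M, ‖u - projCL N u‖ ≤ C * ‖u‖) (hNM : ∀ v ∈ N, ‖v - projCL M v‖ ≤ C * ‖v‖) :
    ‖projCL M - projCL N‖ ≤ C := by
  have closure_le {M : Submodule ℂ E} (Q : E →L[ℂ] E) (h : ∀ u ∈ M, ‖u - Q u‖ ≤ C * ‖u‖) :
      ∀ u ∈ M.topologicalClosure, ‖u - Q u‖ ≤ C * ‖u‖ :=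
    le_on_closure h (by fun_prop) (by fun_prop)
  rw [projCL_eq_starProjection, projCL_eq_starProjection]
  exact Submodule.norm_starProjection_sub_starProjection_le hC (closure_le _ hMN) (closure_le _ hNM)

variable {H₁ H₂ : Type*}
  [NormedAddCommGroup H₁] [InnerProductSpace ℂ H₁] [CompleteSpace H₁]
  [NormedAddCommGroup H₂] [InnerProductSpace ℂ H₂] [CompleteSpace H₂]

theorem norm_sub_projCL_graphL2_le {S T : H₁ →ₗ.[ℂ] H₂} (hdom : S.domain ≤ T.domain) {C : ℝ}
    (hC : 0 ≤ C)
    (h : ∀ (x : H₁) (hxS : x ∈ S.domain) (hxT : x ∈ T.domain),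
      ‖S ⟨x, hxS⟩ - T ⟨x, hxT⟩‖ ≤ C * ‖x‖) :
    ∀ u ∈ graphL2 S, ‖u - projCL (graphL2 T) u‖ ≤ C * ‖u‖ := by
  intro u hu
  obtain ⟨_, hp, rfl⟩ := Submodule.mem_map.1 hu
  obtain ⟨x, rfl⟩ := (S.mem_graph_iff').1 hp
  have hv : WithLp.toLp 2 ((x : H₁), T ⟨x, hdom x.2⟩) ∈ (graphL2 T).topologicalClosure :=
    Submodule.le_topologicalClosure _ (Submodule.mem_map_of_mem (T.mem_graph ⟨x, hdom x.2⟩))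
  calc _ ≤ ‖WithLp.toLp 2 ((x : H₁), S x) - WithLp.toLp 2 ((x : H₁), T ⟨x, hdom x.2⟩)‖ :=
        Submodule.norm_sub_starProjection_le_of_mem _ _ hv
    _ = ‖S x - T ⟨x, hdom x.2⟩‖ := by
        rw [← WithLp.toLp_sub, Prod.mk_sub_mk, sub_self, WithLp.norm_toLp_snd]
    _ ≤ C * ‖(x : H₁)‖ := h x x.2 (hdom x.2)
    _ ≤ C * ‖WithLp.toLp 2 ((x : H₁), S x)‖ := by
        gcongr
        exact WithLp.norm_fst_le H₁ (WithLp.toLp 2 ((x : H₁), S x))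

end Gap

theorem gap_le_of_sub_bounded_general {H₁ H₂ : Type*}
    [NormedAddCommGroup H₁] [InnerProductSpace ℂ H₁] [CompleteSpace H₁]
    [NormedAddCommGroup H₂] [InnerProductSpace ℂ H₂] [CompleteSpace H₂]
    (S T : H₁ →ₗ.[ℂ] H₂)
    (hdom : S.domain = T.domain) (C : ℝ) (hC : 0 ≤ C)
    (hbdd : ∀ (x : H₁) (hxT : x ∈ T.domain) (hxS : x ∈ S.domain),
      ‖T ⟨x, hxT⟩ - S ⟨x, hxS⟩‖ ≤ C * ‖x‖) :
    gap S T ≤ C :=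
  norm_projCL_sub_projCL_le hC
    (norm_sub_projCL_graphL2_le hdom.le hC fun x hxS hxT =>
      norm_sub_rev (T _) (S _) ▸ hbdd x hxT hxS)
    (norm_sub_projCL_graphL2_le hdom.ge hC fun x hxT hxS => hbdd x hxT hxS)

/-- If `S` and `T` are densely defined closed operators between complex Hilbert spaces with
equal domains and the difference `T - S` is bounded by the constant `C` on the common domain,
then the gap satisfies `θ(S,T) ≤ C`. -/
theorem gap_le_of_sub_bounded {H₁ H₂ : Type*}
    [NormedAddCommGroup H₁] [InnerProductSpace ℂ H₁] [CompleteSpace H₁]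
    [NormedAddCommGroup H₂] [InnerProductSpace ℂ H₂] [CompleteSpace H₂]
    (S T : H₁ →ₗ.[ℂ] H₂)
    (hSdense : Dense (S.domain : Set H₁)) (hTdense : Dense (T.domain : Set H₁))
    (hSclosed : S.IsClosed) (hTclosed : T.IsClosed)
    (hdom : S.domain = T.domain) (C : ℝ) (hC : 0 ≤ C)
    (hbdd : ∀ (x : H₁) (hxT : x ∈ T.domain) (hxS : x ∈ S.domain),
      ‖T ⟨x, hxT⟩ - S ⟨x, hxS⟩‖ ≤ C * ‖x‖) :
    gap S T ≤ C :=
  gap_le_of_sub_bounded_general S T hdom C hC hbdd
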